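/- arXiv:2001.08493 — 2 statements merged into one kernel-verified Lean document; each statement's English description precedes it below -/
import Mathlib

section
/- Let v be a vertex of a CAT(0) cube complex X with W_v finite. Then there exists a vertex w ≠ v with W_v ⊆ W_w if and only if the link of v is a cone, i.e. there is a hyperplane in W_v transverse to every other hyperplane in W_v. -/
open SimpleGraph

variable {V : Type*}

/-- A median graph: combinatorial model of (the 1-skeleton of) a CAT(0) cube complex. -/
def IsMedianGraph (G : SimpleGraph V) : Prop :=
  G.Connected ∧ ∀ x y z : V, ∃! m : V,
    G.dist x m + G.dist m y = G.dist x y ∧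
    G.dist x m + G.dist m z = G.dist x z ∧
    G.dist y m + G.dist m z = G.dist y z

/-- Djoković–Winkler relation on oriented edges of a median graph; hyperplanes are its classes. -/
def Theta (G : SimpleGraph V) (e f : V × V) : Prop :=
  G.dist e.1 f.1 + G.dist e.2 f.2 ≠ G.dist e.1 f.2 + G.dist e.2 f.1

/-- A hyperplane, identified with the set of (oriented) edges crossing it. -/
def IsHyperplane (G : SimpleGraph V) (h : Set (V × V)) : Prop :=
  ∃ e : V × V, G.Adj e.1 e.2 ∧ h = {f | G.Adj f.1 f.2 ∧ Theta G e f}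

/-- The hyperplane `h` is adjacent to the vertex `v` (i.e. `v` lies in the carrier of `h`). -/
def AdjTo (G : SimpleGraph V) (h : Set (V × V)) (v : V) : Prop :=
  ∃ e ∈ h, e.1 = v ∨ e.2 = v

/-- `Wv G v`: the set of hyperplanes adjacent to `v`. -/
def Wv (G : SimpleGraph V) (v : V) : Set (Set (V × V)) :=
  {h | IsHyperplane G h ∧ AdjTo G h v}

/-- Two hyperplanes are in contact if their carriers share a vertex. -/
def Contact (G : SimpleGraph V) (h h' : Set (V × V)) : Prop :=
  ∃ v : V, AdjTo G h v ∧ AdjTo G h' v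

/-- Two hyperplanes are transverse if they cross a common square. -/
def Transverse (G : SimpleGraph V) (h h' : Set (V × V)) : Prop :=
  ∃ a b c d : V, (a, b) ∈ h ∧ (c, d) ∈ h ∧ (a, c) ∈ h' ∧ (b, d) ∈ h' ∧
    G.Adj a b ∧ G.Adj c d ∧ G.Adj a c ∧ G.Adj b d

/-- A clique in the contact graph: a set of hyperplanes whose carriers pairwise intersect. -/
def IsContactClique (G : SimpleGraph V) (C : Set (Set (V × V))) : Prop :=
  (∀ h ∈ C, IsHyperplane G h) ∧ ∀ h ∈ C, ∀ h' ∈ C, h ≠ h' → Contact G h h'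

/-- A maximal clique in the contact graph. -/
def IsMaxContactClique (G : SimpleGraph V) (C : Set (Set (V × V))) : Prop :=
  IsContactClique G C ∧ ∀ C', IsContactClique G C' → C ⊆ C' → C' = C

/-- The link of `v` is a cone, i.e. `v` is an extremal vertex. -/
def LinkIsCone (G : SimpleGraph V) (v : V) : Prop :=
  ∃ h ∈ Wv G v, ∀ h' ∈ Wv G v, h' ≠ h → Transverse G h h'

/-- Uniform local finiteness. -/
def UnifLocFinite (G : SimpleGraph V) : Prop :=
  ∃ N : ℕ, ∀ v : V, (G.neighborSet v).Finite ∧ (G.neighborSet v).ncard ≤ N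

abbrev Hyp (G : SimpleGraph V) := {h : Set (V × V) // IsHyperplane G h}

/-- The contact graph `𝒞(X)`. -/
def contactGraph (G : SimpleGraph V) : SimpleGraph (Hyp G) where
  Adj h h' := h ≠ h' ∧ Contact G h.1 h'.1
  symm := by
    constructor
    rintro h h' ⟨hne, v, hv, hv'⟩
    exact ⟨hne.symm, v, hv', hv⟩
  loopless := by constructor; rintro h ⟨hne, -⟩; exact hne rfl

/-- `Ical G w` = I(w): the hyperplanes whose carrier contains the carrier of `w`,
i.e. the intersection of the sets `Wv G v` over all vertices `v` adjacent to `w`. -/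
def Ical (G : SimpleGraph V) (w : Set (V × V)) : Set (Set (V × V)) :=
  {u | IsHyperplane G u ∧ ∀ v : V, AdjTo G w v → AdjTo G u v}

/-- `Ical0 G w` = I⁰(w): the hyperplanes with the same carrier as `w`. -/
def Ical0 (G : SimpleGraph V) (w : Set (V × V)) : Set (Set (V × V)) :=
  {u | u ∈ Ical G w ∧ w ∈ Ical G u}

/-- The action of a cubical automorphism on sets of edges (e.g. hyperplanes). -/
def hmap (G : SimpleGraph V) (φ : G ≃g G) (h : Set (V × V)) : Set (V × V) :=
  (fun e : V × V => (φ e.1, φ e.2)) '' h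

/-- `π` is the vertex permutation induced by the contact-graph automorphism `ψ` via the
correspondence between vertices and maximal cliques (`ρ(ψ) = π`). -/
def InducesPerm (G : SimpleGraph V) (ψ : contactGraph G ≃g contactGraph G)
    (π : Equiv.Perm V) : Prop :=
  ∀ (v : V) (h : Hyp G), h.1 ∈ Wv G v ↔ (ψ h).1 ∈ Wv G (π v)

/-- The hyperplane `u` is adjacent, inside the cube complex structure of a hyperplane `w`,
to the vertex of `w` given by the edge `e ∈ w`: `u` crosses a square containing `e`. -/
def HypAdjEdge (G : SimpleGraph V) (u : Set (V × V)) (e : V × V) : Prop :=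
  ∃ c d : V, (e.1, c) ∈ u ∧ (e.2, d) ∈ u ∧ G.Adj c d

/-- The link, in the cube complex structure of hyperplane `w`, of the vertex given by
`e ∈ w` is a cone (i.e. this vertex of `w` is extremal). -/
def HypLinkCone (G : SimpleGraph V) (w : Set (V × V)) (e : V × V) : Prop :=
  ∃ u, IsHyperplane G u ∧ u ≠ w ∧ HypAdjEdge G u e ∧
    ∀ u', IsHyperplane G u' → u' ≠ w → HypAdjEdge G u' e → u' ≠ u → Transverse G u u'

/-- No hyperplane of `X` has an extremal vertex. -/
def NoHypExtremalVertex (G : SimpleGraph V) : Prop :=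
  ∀ w, IsHyperplane G w → ∀ e ∈ w, ¬ HypLinkCone G w e


/-! Halfspaces of a median graph, the sets of vertices strictly closer to one end of an edge
than to the other, are convex, and a hyperplane is exactly the set of edges separated by the
halfspaces of any one of its edges. Two consequences drive the proof: carriers of hyperplanes are
convex, and two edges `va`, `vb` at `v` span a square as soon as some vertex lies beyond both.

If `W_v ⊆ W_w`, the first edge `vn` of a geodesic from `v` to `w` is dual to a hyperplane
transverse to every other `h ∈ W_v`: the carrier of `h` contains `v` and `w`, hence `n`, and the
edge of `h` at `n` leads to a square spanned by `vn` and the edge of `h` at `v`. Conversely, if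
the hyperplane dual to `va` crosses every other `h ∈ W_v` in a square, some vertex lies beyond
both it and `h`, and the resulting square at `v` carries an edge of `h` at `a`. -/

def halfspace (G : SimpleGraph V) (a b : V) : Set V :=
  {x | G.dist x a < G.dist x b}

theorem mem_halfspace {G : SimpleGraph V} {a b x : V} :
    x ∈ halfspace G a b ↔ G.dist x a < G.dist x b :=
  Iff.rfl

def hyperplaneOf (G : SimpleGraph V) (e : V × V) : Set (V × V) :=
  {f | G.Adj f.1 f.2 ∧ Theta G e f}

theorem mem_halfspace_self {G : SimpleGraph V} {a b : V} (hab : G.Adj a b) :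
    a ∈ halfspace G a b := by
  rw [mem_halfspace, dist_self, dist_eq_one_iff_adj.mpr hab]
  exact one_pos

theorem mem_hyperplaneOf_swap {G : SimpleGraph V} {e : V × V} {x y : V}
    (he : (x, y) ∈ hyperplaneOf G e) : (y, x) ∈ hyperplaneOf G e :=
  ⟨he.1.symm, Ne.symm he.2⟩

theorem hyperplaneOf_mem_Wv {G : SimpleGraph V} {a b x y : V} (hab : G.Adj a b)
    (he : (x, y) ∈ hyperplaneOf G (a, b)) : hyperplaneOf G (a, b) ∈ Wv G x :=
  ⟨⟨(a, b), hab, rfl⟩, (x, y), he, Or.inl rfl⟩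

theorem SimpleGraph.Connected.exists_adj_dist_add_dist_eq {G : SimpleGraph V}
    (hconn : G.Connected) {v w : V} (hne : v ≠ w) :
    ∃ n, G.Adj v n ∧ G.dist v n + G.dist n w = G.dist v w := by
  obtain ⟨p, hp⟩ := hconn.exists_walk_length_eq_dist v w
  cases p with
  | nil => exact absurd rfl hne
  | @cons _ n _ hvn q =>
    have hq : G.dist n w ≤ q.length := dist_le q
    have hvn' : G.dist v n = 1 := dist_eq_one_iff_adj.mpr hvn
    have htri : G.dist v w ≤ G.dist v n + G.dist n w := hconn.dist_triangle
    rw [Walk.length_cons] at hp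
    exact ⟨n, hvn, by omega⟩

theorem SimpleGraph.Connected.dist_add_dist_trans {G : SimpleGraph V} (hconn : G.Connected)
    {x y z p : V} (hp : G.dist x p + G.dist p z = G.dist x z)
    (hz : G.dist x z + G.dist z y = G.dist x y) :
    G.dist x p + G.dist p y = G.dist x y := by
  have h1 : G.dist p y ≤ G.dist p z + G.dist z y := hconn.dist_triangle
  have h2 : G.dist x y ≤ G.dist x p + G.dist p y := hconn.dist_triangle
  omega

namespace IsMedianGraph

variable {G : SimpleGraph V}

theorem dist_eq_add_one_or (hG : IsMedianGraph G) {a b : V} (hab : G.Adj a b) (x : V) :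
    G.dist x b = G.dist x a + 1 ∨ G.dist x a = G.dist x b + 1 := by
  obtain ⟨m, ⟨h1, h2, h3⟩, -⟩ := hG.2 a b x
  have hd : G.dist a b = 1 := dist_eq_one_iff_adj.mpr hab
  have cxa : G.dist x a = G.dist a x := dist_comm
  have cxb : G.dist x b = G.dist b x := dist_comm
  have cab : G.dist b a = G.dist a b := dist_comm
  obtain h | h : G.dist a m = 0 ∨ G.dist m b = 0 := by omega
  · obtain rfl := hG.1.dist_eq_zero_iff.mp h
    omega
  · obtain rfl := hG.1.dist_eq_zero_iff.mp h
    omega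

theorem mem_halfspace_iff (hG : IsMedianGraph G) {a b x : V} (hab : G.Adj a b) :
    x ∈ halfspace G a b ↔ G.dist x b = G.dist x a + 1 := by
  rw [mem_halfspace]
  rcases hG.dist_eq_add_one_or hab x with h | h <;> omega

theorem notMem_halfspace_iff (hG : IsMedianGraph G) {a b x : V} (hab : G.Adj a b) :
    x ∉ halfspace G a b ↔ x ∈ halfspace G b a := by
  rw [mem_halfspace, mem_halfspace]
  rcases hG.dist_eq_add_one_or hab x with h | h <;> omega

theorem compl_halfspace (hG : IsMedianGraph G) {a b : V} (hab : G.Adj a b) :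
    (halfspace G a b)ᶜ = halfspace G b a :=
  Set.ext fun _ => hG.notMem_halfspace_iff hab

theorem mem_halfspace_of_between (hG : IsMedianGraph G) {a b u m : V} (hab : G.Adj a b)
    (hu : u ∈ halfspace G a b) (hm : G.dist u m + G.dist m a = G.dist u a) :
    m ∈ halfspace G a b := by
  have htri : G.dist u b ≤ G.dist u m + G.dist m b := hG.1.dist_triangle
  rw [hG.mem_halfspace_iff hab] at hu ⊢
  rcases hG.dist_eq_add_one_or hab m with h | h <;> omega

theorem mem_halfspace_of_isMedian (hG : IsMedianGraph G) {a b u v z : V} (hab : G.Adj a b)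
    (hu : u ∈ halfspace G a b) (hv : v ∈ halfspace G a b)
    (hz : G.dist u z + G.dist z v = G.dist u v ∧ G.dist u z + G.dist z b = G.dist u b ∧
      G.dist v z + G.dist z b = G.dist v b) :
    z ∈ halfspace G a b := by
  obtain ⟨y, ⟨hy₁, hy₂, hy₃⟩, -⟩ := hG.2 u v a
  obtain ⟨m, -, huniq⟩ := hG.2 u v b
  have hy : y ∈ halfspace G a b := hG.mem_halfspace_of_between hab hu hy₂
  rw [hG.mem_halfspace_iff hab] at hu hv hy
  -- the median of `u`, `v`, `a` is also a median of `u`, `v`, `b`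
  obtain rfl : z = y := (huniq z hz).trans (huniq y ⟨hy₁, by omega, by omega⟩).symm
  exact (hG.mem_halfspace_iff hab).mpr hy

theorem halfspace_convex (hG : IsMedianGraph G) {a b u v z : V} (hab : G.Adj a b)
    (hu : u ∈ halfspace G a b) (hv : v ∈ halfspace G a b)
    (hz : G.dist u z + G.dist z v = G.dist u v) : z ∈ halfspace G a b := by
  induction hn : G.dist z b using Nat.strong_induction_on generalizing z with
  | _ n ih =>
  by_contra hzA
  have hzB := (hG.notMem_halfspace_iff hab).mp hzA
  -- the median `p` of `x`, `z`, `b` stays on `b`'s side, so by induction it cannot differ from `z`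
  have hgeod : ∀ x y, G.dist x z + G.dist z y = G.dist x y →
      (∀ p, G.dist x p + G.dist p y = G.dist x y → G.dist p b < n → p ∈ halfspace G a b) →
      G.dist x z + G.dist z b = G.dist x b := by
    intro x y hxy hind
    obtain ⟨p, ⟨h₁, h₂, h₃⟩, -⟩ := hG.2 x z b
    obtain rfl | hpz := eq_or_ne p z
    · exact h₂
    have hzp : G.dist z p ≠ 0 := fun h => hpz (hG.1.dist_eq_zero_iff.mp h).symm
    refine absurd (hind p (hG.1.dist_add_dist_trans h₁ hxy) (by omega)) ?_
    exact (hG.notMem_halfspace_iff hab).mpr (hG.mem_halfspace_of_between hab.symm hzB h₃)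
  have hcomm : ∀ p, G.dist v p + G.dist p u = G.dist v u ↔
      G.dist u p + G.dist p v = G.dist u v := fun p => by
    rw [dist_comm (u := v) (v := p), dist_comm (u := p) (v := u), dist_comm (u := v) (v := u)]
    omega
  have hub := hgeod u v hz fun p hp hlt => ih _ hlt hp rfl
  have hvb := hgeod v u ((hcomm z).mpr hz) fun p hp hlt => ih _ hlt ((hcomm p).mp hp) rfl
  exact hzA (hG.mem_halfspace_of_isMedian hab hu hv ⟨hz, hub, hvb⟩)

theorem theta_iff (hG : IsMedianGraph G) {a b x y : V} (hab : G.Adj a b) :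
    Theta G (a, b) (x, y) ↔ (x ∈ halfspace G a b ↔ y ∈ halfspace G b a) := by
  have c₁ : G.dist a x = G.dist x a := dist_comm
  have c₂ : G.dist b y = G.dist y b := dist_comm
  have c₃ : G.dist a y = G.dist y a := dist_comm
  have c₄ : G.dist b x = G.dist x b := dist_comm
  change G.dist a x + G.dist b y ≠ G.dist a y + G.dist b x ↔ _
  rw [mem_halfspace, mem_halfspace]
  rcases hG.dist_eq_add_one_or hab x with hx | hx <;>
    rcases hG.dist_eq_add_one_or hab y with hy | hy <;> omega

theorem halfspace_subset (hG : IsMedianGraph G) {a b x y : V} (hab : G.Adj a b)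
    (hxy : G.Adj x y) (hx : x ∈ halfspace G a b) (hy : y ∈ halfspace G b a) :
    halfspace G x y ⊆ halfspace G a b := by
  intro z hz
  by_contra hzA
  have hxy' : G.dist x y = 1 := dist_eq_one_iff_adj.mpr hxy
  rw [hG.mem_halfspace_iff hxy] at hz
  refine (hG.notMem_halfspace_iff hab).mpr ?_ hx
  exact hG.halfspace_convex hab.symm ((hG.notMem_halfspace_iff hab).mp hzA) hy (by omega)

/-- Djoković's lemma: the halfspaces of an edge do not depend on the edge within its
hyperplane. -/
theorem halfspace_eq (hG : IsMedianGraph G) {a b x y : V} (hab : G.Adj a b)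
    (hxy : G.Adj x y) (hx : x ∈ halfspace G a b) (hy : y ∈ halfspace G b a) :
    halfspace G x y = halfspace G a b := by
  refine (hG.halfspace_subset hab hxy hx hy).antisymm ?_
  rw [← Set.compl_subset_compl, hG.compl_halfspace hab, hG.compl_halfspace hxy]
  exact hG.halfspace_subset hab.symm hxy.symm hy hx

theorem mem_hyperplaneOf_iff (hG : IsMedianGraph G) {a b x y : V} (hab : G.Adj a b) :
    (x, y) ∈ hyperplaneOf G (a, b) ↔
      G.Adj x y ∧ (x ∈ halfspace G a b ↔ y ∈ halfspace G b a) :=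
  and_congr_right fun _ => hG.theta_iff hab

theorem mem_hyperplaneOf_self (hG : IsMedianGraph G) {a b : V} (hab : G.Adj a b) :
    (a, b) ∈ hyperplaneOf G (a, b) :=
  (hG.mem_hyperplaneOf_iff hab).mpr
    ⟨hab, iff_of_true (mem_halfspace_self hab) (mem_halfspace_self hab.symm)⟩

theorem hyperplaneOf_eq (hG : IsMedianGraph G) {a b x y : V} (hab : G.Adj a b)
    (he : (x, y) ∈ hyperplaneOf G (a, b)) : hyperplaneOf G (x, y) = hyperplaneOf G (a, b) := by
  obtain ⟨hxy, hsep⟩ := (hG.mem_hyperplaneOf_iff hab).mp he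
  ext ⟨p, q⟩
  rw [hG.mem_hyperplaneOf_iff hxy, hG.mem_hyperplaneOf_iff hab]
  by_cases hx : x ∈ halfspace G a b
  · rw [hG.halfspace_eq hab hxy hx (hsep.mp hx),
      hG.halfspace_eq hab.symm hxy.symm (hsep.mp hx) hx]
  · have hy : y ∈ halfspace G a b := (hG.notMem_halfspace_iff hab.symm).mp (mt hsep.mpr hx)
    have hx' := (hG.notMem_halfspace_iff hab).mp hx
    rw [hG.halfspace_eq hab.symm hxy hx' hy, hG.halfspace_eq hab hxy.symm hy hx']
    simp only [← hG.notMem_halfspace_iff hab]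
    tauto

theorem hyperplaneOf_eq_of_mem_of_mem (hG : IsMedianGraph G) {a b c d x y : V}
    (hab : G.Adj a b) (hcd : G.Adj c d) (h₁ : (x, y) ∈ hyperplaneOf G (a, b))
    (h₂ : (x, y) ∈ hyperplaneOf G (c, d)) : hyperplaneOf G (a, b) = hyperplaneOf G (c, d) :=
  (hG.hyperplaneOf_eq hab h₁).symm.trans (hG.hyperplaneOf_eq hcd h₂)

theorem exists_eq_hyperplaneOf_of_mem_Wv (hG : IsMedianGraph G) {h : Set (V × V)} {v : V}
    (hh : h ∈ Wv G v) : ∃ a, G.Adj v a ∧ h = hyperplaneOf G (v, a) := by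
  obtain ⟨⟨⟨c, d⟩, hcd, rfl⟩, ⟨x, y⟩, he, rfl | rfl⟩ := hh
  · exact ⟨y, he.1, (hG.hyperplaneOf_eq hcd he).symm⟩
  · exact ⟨x, he.1.symm, (hG.hyperplaneOf_eq hcd (mem_hyperplaneOf_swap he)).symm⟩

theorem exists_mem_hyperplaneOf_of_mem_Wv (hG : IsMedianGraph G) {a b z : V}
    (hz : hyperplaneOf G (a, b) ∈ Wv G z) :
    ∃ m, (z, m) ∈ hyperplaneOf G (a, b) := by
  obtain ⟨m, hzm, heq⟩ := hG.exists_eq_hyperplaneOf_of_mem_Wv hz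
  exact ⟨m, heq ▸ hG.mem_hyperplaneOf_self hzm⟩

theorem exists_mem_hyperplaneOf_of_between (hG : IsMedianGraph G) {u u' w s z : V}
    (huu' : G.Adj u u') (hws : (w, s) ∈ hyperplaneOf G (u, u'))
    (hw : w ∈ halfspace G u u') (hz : G.dist u z + G.dist z w = G.dist u w) :
    ∃ m, (z, m) ∈ hyperplaneOf G (u, u') := by
  obtain ⟨hws', hsep⟩ := (hG.mem_hyperplaneOf_iff huu').mp hws
  have hs : s ∈ halfspace G u' u := hsep.mp hw
  have hzA := hG.halfspace_convex huu' (mem_halfspace_self huu') hw hz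
  have hzu' := (hG.mem_halfspace_iff huu').mp hzA
  have hzs := (hG.mem_halfspace_iff hws').mp (hG.halfspace_eq huu' hws' hw hs ▸ hzA)
  have hu'w := (hG.mem_halfspace_iff hws'.symm).mp
    (hG.halfspace_eq huu'.symm hws'.symm hs hw ▸ mem_halfspace_self huu'.symm)
  have hwu' := (hG.mem_halfspace_iff huu').mp hw
  -- the median of `z`, `u'`, `s` is the required neighbour of `z`
  obtain ⟨m, ⟨h₁, h₂, h₃⟩, -⟩ := hG.2 z u' s
  have c₁ : G.dist u' m = G.dist m u' := dist_comm
  have c₂ : G.dist u' w = G.dist w u' := dist_comm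
  have c₃ : G.dist u w = G.dist w u := dist_comm
  have c₄ : G.dist u z = G.dist z u := dist_comm
  have hzm : G.dist z m = 1 := by omega
  refine ⟨m, (hG.mem_hyperplaneOf_iff huu').mpr
    ⟨dist_eq_one_iff_adj.mp hzm, iff_of_true hzA ?_⟩⟩
  exact hG.halfspace_convex huu'.symm (mem_halfspace_self huu'.symm) hs h₃

theorem mem_Wv_of_between (hG : IsMedianGraph G) {h : Set (V × V)} {x y z : V}
    (hx : h ∈ Wv G x) (hy : h ∈ Wv G y) (hz : G.dist x z + G.dist z y = G.dist x y) :
    h ∈ Wv G z := by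
  obtain ⟨x', hxx', rfl⟩ := hG.exists_eq_hyperplaneOf_of_mem_Wv hx
  obtain ⟨y', hyy'⟩ := hG.exists_mem_hyperplaneOf_of_mem_Wv hy
  suffices ∃ m, (z, m) ∈ hyperplaneOf G (x, x') from
    let ⟨_, hzm⟩ := this; hyperplaneOf_mem_Wv hxx' hzm
  obtain ⟨hyy'', hsep⟩ := (hG.mem_hyperplaneOf_iff hxx').mp hyy'
  by_cases hyA : y ∈ halfspace G x x'
  · exact hG.exists_mem_hyperplaneOf_of_between hxx' hyy' hyA hz
  have hy'A : y' ∈ halfspace G x x' := (hG.notMem_halfspace_iff hxx'.symm).mp (mt hsep.mpr hyA)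
  have hyB := (hG.notMem_halfspace_iff hxx').mp hyA
  by_cases hzA : z ∈ halfspace G x x'
  · have hxy : G.dist x y ≤ G.dist x y' + G.dist y' y := hG.1.dist_triangle
    have hy'y : G.dist y' y = 1 := dist_eq_one_iff_adj.mpr hyy''.symm
    have hzy := (hG.mem_halfspace_iff hyy''.symm).mp
      ((hG.halfspace_eq hxx' hyy''.symm hy'A hyB).symm ▸ hzA)
    have hxy' : G.dist x y' ≤ G.dist x z + G.dist z y' := hG.1.dist_triangle
    exact hG.exists_mem_hyperplaneOf_of_between hxx' (mem_hyperplaneOf_swap hyy') hy'A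
      (by omega)
  · have hzx := (hG.mem_halfspace_iff hxx'.symm).mp ((hG.notMem_halfspace_iff hxx').mp hzA)
    have hx'y : G.dist x' y ≤ G.dist x' z + G.dist z y := hG.1.dist_triangle
    have hxy : G.dist x y ≤ G.dist x x' + G.dist x' y := hG.1.dist_triangle
    have hxx'1 : G.dist x x' = 1 := dist_eq_one_iff_adj.mpr hxx'
    have c : G.dist x z = G.dist z x := dist_comm
    have c' : G.dist x' z = G.dist z x' := dist_comm
    have hx'x := mem_hyperplaneOf_swap (hG.mem_hyperplaneOf_self hxx')
    rw [← hG.hyperplaneOf_eq hxx' hx'x] at hyy' ⊢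
    exact hG.exists_mem_hyperplaneOf_of_between hxx'.symm hyy' hyB (by omega)

theorem mem_halfspace_of_adj_of_adj (hG : IsMedianGraph G) {v a b : V} (hva : G.Adj v a)
    (hvb : G.Adj v b) (hab : a ≠ b) : a ∈ halfspace G v b := by
  have hav : G.dist a v = 1 := dist_eq_one_iff_adj.mpr hva.symm
  have hab' : G.dist a b ≠ 0 := fun h => hab (hG.1.dist_eq_zero_iff.mp h)
  rw [mem_halfspace]
  rcases hG.dist_eq_add_one_or hvb a with h | h <;> omega

theorem exists_square (hG : IsMedianGraph G) {v a b u : V} (hva : G.Adj v a)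
    (hvb : G.Adj v b) (hab : a ≠ b) (hua : u ∈ halfspace G a v) (hub : u ∈ halfspace G b v) :
    ∃ m, G.Adj a m ∧ G.Adj b m ∧ m ∈ halfspace G a v ∧ m ∈ halfspace G b v := by
  obtain ⟨m, ⟨h₁, h₂, h₃⟩, -⟩ := hG.2 a b u
  have hmA := hG.halfspace_convex hva.symm (mem_halfspace_self hva.symm) hua h₂
  have hmB := hG.halfspace_convex hvb.symm (mem_halfspace_self hvb.symm) hub h₃
  have haB := hG.mem_halfspace_of_adj_of_adj hva hvb hab
  have hbA := hG.mem_halfspace_of_adj_of_adj hvb hva hab.symm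
  have hab2 := (hG.mem_halfspace_iff hvb).mp haB
  have hav : G.dist a v = 1 := dist_eq_one_iff_adj.mpr hva.symm
  have ham : G.dist a m ≠ 0 := fun h => by
    obtain rfl := hG.1.dist_eq_zero_iff.mp h
    exact (hG.notMem_halfspace_iff hvb).mpr hmB haB
  have hmb : G.dist m b ≠ 0 := fun h => by
    obtain rfl := hG.1.dist_eq_zero_iff.mp h
    exact (hG.notMem_halfspace_iff hva).mpr hmA hbA
  exact ⟨m, dist_eq_one_iff_adj.mp (by omega),
    dist_eq_one_iff_adj.mp (by rw [dist_comm]; omega), hmA, hmB⟩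

theorem exists_mem_halfspace_of_transverse (hG : IsMedianGraph G) {v a b : V}
    (hva : G.Adj v a) (hvb : G.Adj v b) (hne : hyperplaneOf G (v, a) ≠ hyperplaneOf G (v, b))
    (htr : Transverse G (hyperplaneOf G (v, a)) (hyperplaneOf G (v, b))) :
    ∃ u, u ∈ halfspace G a v ∧ u ∈ halfspace G b v := by
  obtain ⟨p, q, r, s, hpq, -, hpr, hqs, -, -, -, -⟩ := htr
  have hpq' := mt (hG.hyperplaneOf_eq_of_mem_of_mem hva hvb hpq) hne
  have hpr' := mt (hG.hyperplaneOf_eq_of_mem_of_mem hvb hva hpr) hne.symm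
  have hqs' := mt (hG.hyperplaneOf_eq_of_mem_of_mem hvb hva hqs) hne.symm
  simp only [hG.mem_hyperplaneOf_iff hva, hG.mem_hyperplaneOf_iff hvb,
    ← hG.notMem_halfspace_iff hva.symm, ← hG.notMem_halfspace_iff hvb.symm]
    at hpq hpr hqs hpq' hpr' hqs'
  -- `pq` crosses only the first hyperplane, `pr` and `qs` only the second, so the corners of the
  -- square realise all four combinations of sides
  replace hpq' := fun h => hpq' ⟨hpq.1, h⟩
  replace hpr' := fun h => hpr' ⟨hpr.1, h⟩
  replace hqs' := fun h => hqs' ⟨hqs.1, h⟩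
  replace hpq := hpq.2
  replace hpr := hpr.2
  replace hqs := hqs.2
  by_cases hpA : p ∈ halfspace G a v <;> by_cases hpB : p ∈ halfspace G b v
  · exact ⟨p, hpA, hpB⟩
  · exact ⟨r, by tauto, by tauto⟩
  · exact ⟨q, by tauto, by tauto⟩
  · exact ⟨s, by tauto, by tauto⟩

theorem linkIsCone_of_Wv_subset (hG : IsMedianGraph G) {v w : V} (hwv : w ≠ v)
    (hsub : Wv G v ⊆ Wv G w) : LinkIsCone G v := by
  obtain ⟨n, hvn, hn⟩ := hG.1.exists_adj_dist_add_dist_eq hwv.symm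
  refine ⟨hyperplaneOf G (v, n), hyperplaneOf_mem_Wv hvn (hG.mem_hyperplaneOf_self hvn),
    fun h' hh' hne => ?_⟩
  obtain ⟨b, hvb, rfl⟩ := hG.exists_eq_hyperplaneOf_of_mem_Wv hh'
  have hnb : n ≠ b := by rintro rfl; exact hne rfl
  have hn' := hG.mem_Wv_of_between hh' (hsub hh') hn
  obtain ⟨c, hc⟩ := hG.exists_mem_hyperplaneOf_of_mem_Wv hn'
  obtain ⟨hnc, hsep⟩ := (hG.mem_hyperplaneOf_iff hvb).mp hc
  have hnB := hG.mem_halfspace_of_adj_of_adj hvn hvb hnb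
  have hbN := hG.mem_halfspace_of_adj_of_adj hvb hvn hnb.symm
  have hcN : c ∈ halfspace G n v := by
    by_contra hcN
    have hnN := (hG.notMem_halfspace_iff hvn).mpr (mem_halfspace_self hvn.symm)
    exact hne (hG.hyperplaneOf_eq_of_mem_of_mem hvb hvn hc
      ((hG.mem_hyperplaneOf_iff hvn).mpr ⟨hnc, iff_of_false hnN hcN⟩))
  obtain ⟨m, hnm, hbm, hmN, hmB⟩ := hG.exists_square hvn hvb hnb hcN (hsep.mp hnB)
  exact ⟨v, n, b, m, hG.mem_hyperplaneOf_self hvn,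
    (hG.mem_hyperplaneOf_iff hvn).mpr ⟨hbm, iff_of_true hbN hmN⟩,
    hG.mem_hyperplaneOf_self hvb, (hG.mem_hyperplaneOf_iff hvb).mpr ⟨hnm, iff_of_true hnB hmB⟩,
    hvn, hbm, hvb, hnm⟩

theorem exists_Wv_subset_of_linkIsCone (hG : IsMedianGraph G) {v : V}
    (hcone : LinkIsCone G v) : ∃ w, w ≠ v ∧ Wv G v ⊆ Wv G w := by
  obtain ⟨h, hh, htr⟩ := hcone
  obtain ⟨a, hva, rfl⟩ := hG.exists_eq_hyperplaneOf_of_mem_Wv hh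
  refine ⟨a, hva.ne', fun h' hh' => ?_⟩
  obtain ⟨b, hvb, rfl⟩ := hG.exists_eq_hyperplaneOf_of_mem_Wv hh'
  obtain heq | hne := eq_or_ne (hyperplaneOf G (v, b)) (hyperplaneOf G (v, a))
  · rw [heq]
    exact hyperplaneOf_mem_Wv hva (mem_hyperplaneOf_swap (hG.mem_hyperplaneOf_self hva))
  have hab : a ≠ b := by rintro rfl; exact hne rfl
  obtain ⟨u, hua, hub⟩ := hG.exists_mem_halfspace_of_transverse hva hvb hne.symm (htr _ hh' hne)
  obtain ⟨m, ham, -, -, hmB⟩ := hG.exists_square hva hvb hab hua hub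
  exact hyperplaneOf_mem_Wv hvb ((hG.mem_hyperplaneOf_iff hvb).mpr
    ⟨ham, iff_of_true (hG.mem_halfspace_of_adj_of_adj hva hvb hab) hmB⟩)

end IsMedianGraph

theorem exists_larger_Wv_iff_cone_general (G : SimpleGraph V) (hG : IsMedianGraph G)
    (v : V) :
    (∃ w : V, w ≠ v ∧ Wv G v ⊆ Wv G w) ↔ LinkIsCone G v :=
  ⟨fun ⟨_, hwv, hsub⟩ => hG.linkIsCone_of_Wv_subset hwv hsub,
    hG.exists_Wv_subset_of_linkIsCone⟩

/-- for a vertex `v` with `Wv G v` finite, there is a vertex `w ≠ v` with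
`Wv G v ⊆ Wv G w` if and only if the link of `v` is a cone. -/
theorem exists_larger_Wv_iff_cone (G : SimpleGraph V) (hG : IsMedianGraph G)
    (v : V) (hfin : (Wv G v).Finite) :
    (∃ w : V, w ≠ v ∧ Wv G v ⊆ Wv G w) ↔ LinkIsCone G v :=
  exists_larger_Wv_iff_cone_general G hG v
end

section
/- Let X be a CAT(0) cube complex and for hyperplanes u, w define u ∈ I⁰(w) iff u ∈ I(w) and w ∈ I(u), equivalently u and w have the same carrier. Then: (a) if u ∈ I⁰(w), then u and w have the same star in the contact graph C(X); (b) u ∈ I⁰(w) iff I⁰(u) = I⁰(w), so the sets I⁰(w) partition the hyperplanes of X. -/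
open SimpleGraph

variable {V : Type*}

section Ical0

variable {G : SimpleGraph V} {t u w x : Set (V × V)}

theorem mem_Ical0_iff :
    u ∈ Ical0 G w ↔ IsHyperplane G u ∧ IsHyperplane G w ∧ AdjTo G u = AdjTo G w := by
  simp only [Ical0, Ical, Set.mem_ofPred_eq]
  constructor
  · rintro ⟨⟨hu, hwu⟩, hw, huw⟩
    exact ⟨hu, hw, funext fun v => propext ⟨huw v, hwu v⟩⟩
  · rintro ⟨hu, hw, h⟩
    exact ⟨⟨hu, fun v => (congrFun h v).mpr⟩, hw, fun v => (congrFun h v).mp⟩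

theorem self_mem_Ical0 (hw : IsHyperplane G w) : w ∈ Ical0 G w :=
  mem_Ical0_iff.2 ⟨hw, hw, rfl⟩

theorem mem_Ical0_trans (hxu : x ∈ Ical0 G u) (huw : u ∈ Ical0 G w) : x ∈ Ical0 G w := by
  obtain ⟨hx, -, hxu⟩ := mem_Ical0_iff.1 hxu
  obtain ⟨-, hw, huw⟩ := mem_Ical0_iff.1 huw
  exact mem_Ical0_iff.2 ⟨hx, hw, hxu.trans huw⟩

theorem mem_Ical0_symm (huw : u ∈ Ical0 G w) : w ∈ Ical0 G u :=
  huw.symm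

theorem contact_iff_of_mem_Ical0 (huw : u ∈ Ical0 G w) : Contact G u t ↔ Contact G w t := by
  obtain ⟨-, -, h⟩ := mem_Ical0_iff.1 huw
  simp only [Contact, h]

theorem Ical0_eq_of_mem (huw : u ∈ Ical0 G w) : Ical0 G u = Ical0 G w :=
  Set.ext fun _ => ⟨(mem_Ical0_trans · huw), (mem_Ical0_trans · (mem_Ical0_symm huw))⟩

theorem mem_Ical0_iff_Ical0_eq (hu : IsHyperplane G u) : u ∈ Ical0 G w ↔ Ical0 G u = Ical0 G w :=
  ⟨Ical0_eq_of_mem, fun h => h ▸ self_mem_Ical0 hu⟩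

theorem Ical0_eq_or_disjoint : Ical0 G u = Ical0 G w ∨ Disjoint (Ical0 G u) (Ical0 G w) := by
  refine or_iff_not_imp_right.2 fun h => ?_
  obtain ⟨x, hxu, hxw⟩ := Set.not_disjoint_iff.1 h
  exact Ical0_eq_of_mem (mem_Ical0_trans (mem_Ical0_symm hxu) hxw)

end Ical0

theorem Ical0_star_and_partition_general (G : SimpleGraph V)
    (w u : Set (V × V)) (hw : IsHyperplane G w) (hu : IsHyperplane G u) :
    (u ∈ Ical0 G w → ∀ t, IsHyperplane G t → (Contact G u t ↔ Contact G w t)) ∧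
    (u ∈ Ical0 G w ↔ Ical0 G u = Ical0 G w) ∧
    (w ∈ Ical0 G w) ∧
    (Ical0 G u = Ical0 G w ∨ Disjoint (Ical0 G u) (Ical0 G w)) :=
  ⟨fun huw _ _ => contact_iff_of_mem_Ical0 huw, mem_Ical0_iff_Ical0_eq hu,
    self_mem_Ical0 hw, Ical0_eq_or_disjoint⟩

/-- (a) hyperplanes in `I⁰(w)` have the same star as `w` in the contact
graph; (b) `u ∈ I⁰(w)` iff `I⁰(u) = I⁰(w)`, so the sets `I⁰(w)` partition the
hyperplanes. -/
theorem Ical0_star_and_partition (G : SimpleGraph V) (hG : IsMedianGraph G)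
    (w u : Set (V × V)) (hw : IsHyperplane G w) (hu : IsHyperplane G u) :
    (u ∈ Ical0 G w → ∀ t, IsHyperplane G t → (Contact G u t ↔ Contact G w t)) ∧
    (u ∈ Ical0 G w ↔ Ical0 G u = Ical0 G w) ∧
    (w ∈ Ical0 G w) ∧
    (Ical0 G u = Ical0 G w ∨ Disjoint (Ical0 G u) (Ical0 G w)) :=
  Ical0_star_and_partition_general G w u hw hu
end
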